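/- In the monoid LS_n with n ≥ 3, the relation L* ∘ R* is not equal to R* ∘ L*. Specifically, for α = identity on {1,2} and β = identity on {1,3}, the pair (α, β) lies in L* ∘ R* but not in R* ∘ L*. -/

import Mathlib

/-- Partial transformations of the chain `Fin n`. -/
abbrev PT (n : ℕ) := Fin n → Option (Fin n)

/-- Composition of partial transformations: apply `α` first, then `β`. -/
def comp {n : ℕ} (α β : PT n) : PT n := fun x => (α x).bind β

/-- `α` is isotone (order-preserving on its domain). -/
def IsIsotone {n : ℕ} (α : PT n) : Prop :=
  ∀ x y a b : Fin n, α x = some a → α y = some b → x ≤ y → a ≤ b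

/-- `α` is order-decreasing on its domain. -/
def IsDecreasing {n : ℕ} (α : PT n) : Prop :=
  ∀ x a : Fin n, α x = some a → a ≤ x

/-- The large Schröder monoid: isotone, order-decreasing partial transformations. -/
def LS (n : ℕ) : Set (PT n) := {α | IsIsotone α ∧ IsDecreasing α}

/-- The image of a partial transformation. -/
def Im {n : ℕ} (α : PT n) : Set (Fin n) := {y | ∃ x, α x = some y}

/-- The height of a partial transformation is the size of its image. -/
noncomputable def height {n : ℕ} (α : PT n) : ℕ := (Im α).ncard

/-- The kernel of `α`, as a set of pairs of elements of the domain. -/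
def kerS {n : ℕ} (α : PT n) : Set (Fin n × Fin n) :=
  {p | ∃ a : Fin n, α p.1 = some a ∧ α p.2 = some a}

/-- The set of fixed points of `α`. -/
def FixPts {n : ℕ} (α : PT n) : Set (Fin n) := {x | α x = some x}

/-- `L*` on `LS n`, characterized by equality of images. -/
def LStar {n : ℕ} (α β : PT n) : Prop := Im α = Im β

/-- `R*` on `LS n`, characterized by equality of kernels. -/
def RStar {n : ℕ} (α β : PT n) : Prop := kerS α = kerS β

/-! For `L* ∘ R*` take `γ = (0 ↦ 0, 2 ↦ 1)` (halving on `{0, 2}`): it lies in `LS n`, has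
the image `{0, 1}` of `α` and, being injective on the domain `{0, 2}` of `β`, the kernel of `β`.
For `R* ∘ L*`, a `γ` with `Im γ = Im β` hits `2`, and as `γ` is decreasing it does so from
some `x ≥ 2`; but `(x, x) ∈ ker γ = ker α` puts `x` in the domain `{0, 1}` of `α`. -/

namespace PT

variable {n : ℕ}

def dom (α : PT n) : Set (Fin n) := {x | ∃ a, α x = some a}

def ofFunOn (p : Fin n → Prop) [DecidablePred p] (f : Fin n → Fin n) : PT n :=
  fun x => if p x then some (f x) else none

section ofFunOn

variable {p : Fin n → Prop} [DecidablePred p] {f : Fin n → Fin n}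

theorem ofFunOn_eq_some {x a : Fin n} : ofFunOn p f x = some a ↔ p x ∧ f x = a := by
  unfold ofFunOn
  split_ifs with hx <;> simp [hx]

theorem mem_LS_ofFunOn (hf : Monotone f) (hf_le : ∀ x, f x ≤ x) : ofFunOn p f ∈ LS n := by
  refine ⟨fun x y a b hx hy hxy => ?_, fun x a hx => ?_⟩
  · obtain ⟨-, rfl⟩ := ofFunOn_eq_some.mp hx
    obtain ⟨-, rfl⟩ := ofFunOn_eq_some.mp hy
    exact hf hxy
  · obtain ⟨-, rfl⟩ := ofFunOn_eq_some.mp hx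
    exact hf_le x

theorem Im_ofFunOn : Im (ofFunOn p f) = f '' {x | p x} := by
  ext y
  simp [Im, ofFunOn_eq_some]

theorem dom_ofFunOn : dom (ofFunOn p f) = {x | p x} := by
  ext x
  simp [dom, ofFunOn_eq_some]

theorem kerS_ofFunOn : kerS (ofFunOn p f) = {r | p r.1 ∧ p r.2 ∧ f r.1 = f r.2} := by
  ext ⟨x, y⟩
  simp only [kerS, ofFunOn_eq_some, Set.mem_ofPred_eq]
  constructor
  · rintro ⟨a, ⟨hx, rfl⟩, hy, hfy⟩
    exact ⟨hx, hy, hfy.symm⟩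
  · rintro ⟨hx, hy, hfxy⟩
    exact ⟨f x, ⟨hx, rfl⟩, hy, hfxy.symm⟩

theorem rStar_ofFunOn {g : Fin n → Fin n} (hf : Set.InjOn f {x | p x})
    (hg : Set.InjOn g {x | p x}) : RStar (ofFunOn p f) (ofFunOn p g) := by
  simp only [RStar, kerS_ofFunOn]
  ext ⟨x, y⟩
  exact and_congr_right fun hx => and_congr_right fun hy =>
    (hf.eq_iff hx hy).trans (hg.eq_iff hx hy).symm

end ofFunOn

theorem mem_dom_iff_mem_kerS {α : PT n} {x : Fin n} : x ∈ dom α ↔ (x, x) ∈ kerS α :=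
  ⟨fun ⟨a, hx⟩ => ⟨a, hx, hx⟩, fun ⟨a, hx, _⟩ => ⟨a, hx⟩⟩

theorem exists_mem_dom_le_of_mem_Im {α : PT n} (hα : IsDecreasing α) {y : Fin n}
    (hy : y ∈ Im α) : ∃ x ∈ dom α, y ≤ x :=
  let ⟨x, hx⟩ := hy
  ⟨x, ⟨y, hx⟩, hα x y hx⟩

end PT

theorem RStar.dom_eq {n : ℕ} {α β : PT n} (h : RStar α β) : PT.dom α = PT.dom β := by
  ext x
  rw [PT.mem_dom_iff_mem_kerS, PT.mem_dom_iff_mem_kerS, h]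

namespace Fin

def halve {n : ℕ} (x : Fin n) : Fin n := ⟨x / 2, by omega⟩

theorem halve_monotone {n : ℕ} : Monotone (halve : Fin n → Fin n) :=
  fun _ _ h => Nat.div_le_div_right (Fin.le_def.mp h)

theorem halve_le {n : ℕ} (x : Fin n) : halve x ≤ x :=
  Fin.le_def.mpr (Nat.div_le_self _ _)

theorem injOn_halve_zero_two {n : ℕ} :
    Set.InjOn (halve : Fin n → Fin n) {x | x.val = 0 ∨ x.val = 2} := by
  intro x hx y hy hxy
  simp only [halve, Fin.ext_iff, Set.mem_ofPred_eq] at hx hy hxy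
  ext
  omega

theorem image_halve_zero_two {n : ℕ} (hn : 2 < n) :
    halve '' {x : Fin n | x.val = 0 ∨ x.val = 2} = {y | y.val = 0 ∨ y.val = 1} := by
  ext y
  simp only [Set.mem_image, Set.mem_ofPred_eq, halve, Fin.ext_iff]
  constructor
  · rintro ⟨x, hx, hxy⟩
    omega
  · rintro (hy | hy)
    · exact ⟨⟨0, by omega⟩, Or.inl rfl, by simp [hy]⟩
    · exact ⟨⟨2, hn⟩, Or.inr rfl, by simp [hy]⟩

end Fin

theorem LS_LstarRstar_ne_RstarLstar (n : ℕ) (hn : 3 ≤ n)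
    (α β : PT n)
    (hαdef : α = fun x => if x.val = 0 ∨ x.val = 1 then some x else none)
    (hβdef : β = fun x => if x.val = 0 ∨ x.val = 2 then some x else none) :
    (∃ γ ∈ LS n, LStar α γ ∧ RStar γ β) ∧ ¬(∃ γ ∈ LS n, RStar α γ ∧ LStar γ β) := by
  have hα : α = PT.ofFunOn (fun x : Fin n => x.val = 0 ∨ x.val = 1) id := hαdef
  have hβ : β = PT.ofFunOn (fun x : Fin n => x.val = 0 ∨ x.val = 2) id := hβdef
  subst hα hβ
  constructor
  · refine ⟨PT.ofFunOn _ Fin.halve, PT.mem_LS_ofFunOn Fin.halve_monotone Fin.halve_le, ?_,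
      PT.rStar_ofFunOn Fin.injOn_halve_zero_two (Set.injOn_id _)⟩
    rw [LStar, PT.Im_ofFunOn, PT.Im_ofFunOn, Set.image_id, Fin.image_halve_zero_two (by omega)]
  · rintro ⟨γ, ⟨-, hγ⟩, hR, hL⟩
    have h2 : (⟨2, by omega⟩ : Fin n) ∈ Im γ := by
      rw [hL, PT.Im_ofFunOn, Set.image_id]
      exact Or.inr rfl
    obtain ⟨x, hx, h2x⟩ := PT.exists_mem_dom_le_of_mem_Im hγ h2
    rw [← hR.dom_eq, PT.dom_ofFunOn] at hx
    have h2x : 2 ≤ x.val := Fin.le_def.mp h2x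
    simp only [Set.mem_ofPred_eq] at hx
    omega
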